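/- Define a_1 = 0, a_2 = 1, and a_n = (2n-1)a_{n-1} + a_{n-2} for n ≥ 3. Then for all n ≥ 1, a_n equals the number of linear chord diagrams of size n in which every chord has length at least 2. -/

import Mathlib

/-!
Let `A m p` count the partitions of `{1, …, 2m}` into chords of length at least `2`, where the
single short chord `{p, p + 1}` is also allowed. In a diagram counted by `A (m + 1) 0` the last
point `2m + 2` is joined to some `q + 1 ≤ 2m`; deleting that chord and closing the two gaps turns
a chord `{q, q + 2}` into the short chord `{q, q + 1}`, so `A (m + 1) 0 = ∑_{q < 2m} A m q`.
Splitting according to whether `{p + 1, p + 2}` is a chord gives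
`A (m + 1) (p + 1) = A (m + 1) 0 + A m p`, and substituting this into the first identity yields
`A (m + 2) 0 = (2m + 3) A (m + 1) 0 + A m 0`, the recurrence of `a`.
-/

/-- The set of linear chord diagrams of size `n` in which every chord has length at least `k`:
partitions of `{1,...,2n}` into blocks of size two `{s,e}` with `s < e` and `e - s ≥ k`. -/
def LCD (n k : ℕ) : Set (Finpartition (Finset.Icc 1 (2*n))) :=
  {P | ∀ p ∈ P.parts, ∃ s e : ℕ, s < e ∧ p = {s, e} ∧ k ≤ e - s}

open Finset

namespace Finpartition

variable {α β : Type*} [DecidableEq α] [DecidableEq β] {s : Finset α} {t : Finset β}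

def image (P : Finpartition s) (f : α → β) (hf : Set.InjOn f s) : Finpartition (s.image f) where
  parts := P.parts.image (Finset.image f)
  supIndep := by
    rw [supIndep_iff_pairwiseDisjoint]
    intro _ hq' _ hr' hqr
    obtain ⟨q, hq, rfl⟩ := mem_image.1 hq'
    obtain ⟨r, hr, rfl⟩ := mem_image.1 hr'
    have hqr' : q ≠ r := fun h => hqr (h ▸ rfl)
    rw [Function.onFun, id, id, disjoint_left]
    intro _ hxq hxr
    obtain ⟨x, hx, rfl⟩ := mem_image.1 hxq
    obtain ⟨y, hy, hyx⟩ := mem_image.1 hxr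
    rw [hf (P.le hr hy) (P.le hq hx) hyx] at hy
    exact disjoint_left.1 (P.disjoint hq hr hqr') hx hy
  sup_parts := by
    conv_rhs => rw [← P.sup_parts]
    rw [sup_image, Function.id_comp, sup_eq_biUnion, sup_eq_biUnion, biUnion_image]
    rfl
  bot_notMem h := by
    obtain ⟨q, hq, hq0⟩ := mem_image.1 h
    exact P.ne_bot hq (image_eq_empty.1 hq0)

theorem image_image_parts_of_leftInvOn (P : Finpartition s) {f : α → β} {g : β → α}
    (h : Set.LeftInvOn g f s) :
    (P.parts.image (Finset.image f)).image (Finset.image g) = P.parts := by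
  rw [Finset.image_image]
  refine (image_congr fun q hq => ?_).trans image_id'
  rw [Function.comp_apply, Finset.image_image]
  exact (image_congr fun x hx => h (P.le hq hx)).trans image_id

def equivOfInvOn (f : α → β) (g : β → α) (hf : Set.MapsTo f s t) (hg : Set.MapsTo g t s)
    (h : Set.InvOn g f s t) : Finpartition s ≃ Finpartition t where
  toFun P := (P.image f h.1.injOn).copy (by exact_mod_cast (h.bijOn hf hg).image_eq)
  invFun Q := (Q.image g h.2.injOn).copy (by exact_mod_cast (h.symm.bijOn hg hf).image_eq)
  left_inv P := Finpartition.ext (P.image_image_parts_of_leftInvOn h.1)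
  right_inv Q := Finpartition.ext (Q.image_image_parts_of_leftInvOn h.2)

@[simp]
theorem parts_equivOfInvOn (f : α → β) (g : β → α) (hf : Set.MapsTo f s t)
    (hg : Set.MapsTo g t s) (h : Set.InvOn g f s t) (P : Finpartition s) :
    (equivOfInvOn f g hf hg h P).parts = P.parts.image (Finset.image f) := rfl

theorem sup_erase_parts {p : Finset α} (P : Finpartition s) (hp : p ∈ P.parts) :
    (P.parts.erase p).sup id = s \ p := by
  ext x
  simp only [mem_sup, mem_erase, id, mem_sdiff]
  constructor
  · rintro ⟨q, ⟨hqp, hq⟩, hx⟩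
    exact ⟨P.le hq hx, fun hxp => hqp (P.eq_of_mem_parts hq hp hx hxp)⟩
  · rintro ⟨hx, hxp⟩
    obtain ⟨q, hq, hxq⟩ := P.exists_mem hx
    exact ⟨q, ⟨fun h => hxp (h ▸ hxq), hq⟩, hxq⟩

def eraseEquiv {p : Finset α} (hp : p.Nonempty) (hps : p ⊆ s) :
    {P : Finpartition s // p ∈ P.parts} ≃ Finpartition (s \ p) where
  toFun P := P.1.ofSubset (erase_subset p _) (P.1.sup_erase_parts P.2)
  invFun Q := ⟨Q.extend hp.ne_empty sdiff_disjoint (sdiff_union_of_subset hps), mem_insert_self _ _⟩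
  left_inv P := Subtype.ext (Finpartition.ext (insert_erase P.2))
  right_inv Q := Finpartition.ext (erase_insert fun h =>
    hp.ne_empty (disjoint_self.1 (sdiff_disjoint.mono_left (Q.le h))))

@[simp]
theorem parts_eraseEquiv {p : Finset α} (hp : p.Nonempty) (hps : p ⊆ s)
    (P : {P : Finpartition s // p ∈ P.parts}) : (eraseEquiv hp hps P).parts = P.1.parts.erase p :=
  rfl

end Finpartition

theorem card_eq_sum_card_of_unique_index {X ι : Type*} [Finite X] (S : Set X) (J : Finset ι)
    (A : ι → X → Prop) (hcover : ∀ x ∈ S, ∃ j ∈ J, A j x)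
    (hunique : ∀ x ∈ S, ∀ i ∈ J, ∀ j ∈ J, A i x → A j x → i = j) :
    Nat.card S = ∑ j ∈ J, Nat.card {x ∈ S | A j x} := by
  have hS : S = ⋃ j ∈ (J : Set ι), {x ∈ S | A j x} := by
    ext x
    simp only [Set.mem_iUnion, Set.mem_sep_iff, mem_coe, exists_prop]
    exact ⟨fun hx => (hcover x hx).imp fun j hj => ⟨hj.1, hx, hj.2⟩, fun ⟨_, _, hx, _⟩ => hx⟩
  have hdisj : (J : Set ι).PairwiseDisjoint fun j => {x ∈ S | A j x} :=
    fun i hi j hj hij => Set.disjoint_left.2 fun x hxi hxj =>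
      hij (hunique x hxi.1 i hi j hj hxi.2 hxj.2)
  simp only [Nat.card_coe_set_eq]
  conv_lhs => rw [hS]
  rw [J.finite_toSet.ncard_biUnion (fun _ _ => Set.toFinite _) hdisj, finsum_mem_coe_finset]

theorem pair_eq_pair_iff_of_lt {a b c d : ℕ} (hab : a < b) (hcd : c < d) :
    ({a, b} : Finset ℕ) = {c, d} ↔ a = c ∧ b = d := by
  rw [← coe_inj, coe_pair, coe_pair, Set.pair_eq_pair_iff]
  omega

def IsChord (ok : ℕ → ℕ → Prop) (q : Finset ℕ) : Prop :=
  ∃ s e, s < e ∧ q = {s, e} ∧ ok s e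

def chordDiagrams (M : ℕ) (ok : ℕ → ℕ → Prop) : Set (Finpartition (Icc 1 M)) :=
  {P | ∀ q ∈ P.parts, IsChord ok q}

theorem LCD_eq_chordDiagrams (n k : ℕ) : LCD n k = chordDiagrams (2 * n) (fun s e => k ≤ e - s) :=
  rfl

theorem chordDiagrams_congr {M : ℕ} {ok ok' : ℕ → ℕ → Prop}
    (h : ∀ s e, 1 ≤ s → s < e → e ≤ M → (ok s e ↔ ok' s e)) :
    chordDiagrams M ok = chordDiagrams M ok' := by
  ext P
  refine forall₂_congr fun q hq => exists₂_congr fun s e => ?_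
  refine and_congr_right fun hse => and_congr_right fun hq' => ?_
  have hs := mem_Icc.1 (P.le hq (by simp [hq'] : s ∈ q))
  have he := mem_Icc.1 (P.le hq (by simp [hq'] : e ∈ q))
  exact h s e hs.1 hse he.2

theorem isChord_image_iff {D : Set ℕ} {f : ℕ → ℕ} {ok ok' : ℕ → ℕ → Prop} (hf : StrictMonoOn f D)
    (hok : ∀ s ∈ D, ∀ e ∈ D, s < e → (ok' (f s) (f e) ↔ ok s e)) {q : Finset ℕ} (hq : ↑q ⊆ D) :
    IsChord ok' (q.image f) ↔ IsChord ok q := by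
  constructor
  · rintro ⟨s', e', hse', hq', h⟩
    obtain ⟨s, hs, rfl⟩ := mem_image.1 (hq' ▸ mem_insert_self _ _ : s' ∈ q.image f)
    obtain ⟨e, he, rfl⟩ := mem_image.1 (hq' ▸ by simp : e' ∈ q.image f)
    have hse : s < e := (hf.lt_iff_lt (hq hs) (hq he)).1 hse'
    have hcard : #q = #({s, e} : Finset ℕ) := by
      rw [← card_image_of_injOn (hf.injOn.mono hq), hq', card_pair hse'.ne, card_pair hse.ne]
    refine ⟨s, e, hse, ?_, (hok s (hq hs) e (hq he) hse).1 h⟩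
    exact (eq_of_subset_of_card_le (insert_subset hs (singleton_subset_iff.2 he)) hcard.le).symm
  · rintro ⟨s, e, hse, rfl, h⟩
    have hs : s ∈ D := hq (by simp)
    have he : e ∈ D := hq (by simp)
    exact ⟨f s, f e, hf hs he hse, by simp [image_insert], (hok s hs e he hse).2 h⟩

/-- For `u < v`, the order-preserving bijection from `ℕ \ {u, v}` onto `ℕ` that closes the gaps
left by deleting `u` and `v`; `expand u v` is its inverse. -/
def collapse (u v x : ℕ) : ℕ := if x < u then x else if x < v then x - 1 else x - 2

def expand (u v y : ℕ) : ℕ := if y < u then y else if y + 1 < v then y + 1 else y + 2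

section DeleteChord

variable {M u v : ℕ}

theorem strictMonoOn_collapse (huv : u < v) : StrictMonoOn (collapse u v) {u, v}ᶜ := by
  intro x hx y hy hxy
  simp only [Set.mem_compl_iff, Set.mem_insert_iff, Set.mem_singleton_iff] at hx hy
  unfold collapse
  split_ifs <;> omega

theorem mapsTo_collapse (hu : 1 ≤ u) (huv : u < v) (hv : v ≤ M) :
    Set.MapsTo (collapse u v) ↑(Icc 1 M \ {u, v}) ↑(Icc 1 (M - 2)) := by
  intro x hx
  simp only [coe_sdiff, coe_Icc, coe_insert, coe_singleton, Set.mem_sdiff, Set.mem_Icc,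
    Set.mem_insert_iff, Set.mem_singleton_iff] at hx ⊢
  unfold collapse
  split_ifs <;> omega

theorem mapsTo_expand (hu : 1 ≤ u) (huv : u < v) (hv : v ≤ M) :
    Set.MapsTo (expand u v) ↑(Icc 1 (M - 2)) ↑(Icc 1 M \ {u, v}) := by
  intro y hy
  simp only [coe_sdiff, coe_Icc, coe_insert, coe_singleton, Set.mem_sdiff, Set.mem_Icc,
    Set.mem_insert_iff, Set.mem_singleton_iff] at hy ⊢
  unfold expand
  split_ifs <;> omega

theorem invOn_expand_collapse (huv : u < v) :
    Set.InvOn (expand u v) (collapse u v) {u, v}ᶜ Set.univ := by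
  constructor
  · intro x hx
    simp only [Set.mem_compl_iff, Set.mem_insert_iff, Set.mem_singleton_iff] at hx
    unfold collapse expand
    split_ifs <;> omega
  · intro y _
    unfold collapse expand
    split_ifs <;> omega

theorem isChord_image_collapse_iff {ok ok' : ℕ → ℕ → Prop} (huv : u < v)
    (hrel : ∀ s e, 1 ≤ s → s < e → e ≤ M → s ≠ u → s ≠ v → e ≠ u → e ≠ v →
      (ok' (collapse u v s) (collapse u v e) ↔ ok s e))
    {q : Finset ℕ} (hq : q ⊆ Icc 1 M \ {u, v}) :
    IsChord ok' (q.image (collapse u v)) ↔ IsChord ok q := by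
  have hD : ↑(Icc 1 M \ {u, v}) ⊆ ({u, v}ᶜ : Set ℕ) := fun x hx => by simp_all
  refine isChord_image_iff ((strictMonoOn_collapse huv).mono hD) ?_ (by exact_mod_cast hq)
  intro s hs e he hse
  simp only [coe_sdiff, coe_Icc, Set.mem_sdiff, Set.mem_Icc, coe_insert, coe_singleton,
    Set.mem_insert_iff, Set.mem_singleton_iff, not_or] at hs he
  exact hrel s e hs.1.1 hse he.1.2 hs.2.1 hs.2.2 he.2.1 he.2.2

/-- Deleting the chord `{u, v}` and relabelling the other points by `collapse u v` is a bijection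
onto the diagrams on `M - 2` points. -/
theorem card_chordDiagrams_containing {ok ok' : ℕ → ℕ → Prop} (hu : 1 ≤ u) (huv : u < v)
    (hv : v ≤ M) (hok : ok u v)
    (hrel : ∀ s e, 1 ≤ s → s < e → e ≤ M → s ≠ u → s ≠ v → e ≠ u → e ≠ v →
      (ok' (collapse u v s) (collapse u v e) ↔ ok s e)) :
    Nat.card {P ∈ chordDiagrams M ok | ({u, v} : Finset ℕ) ∈ P.parts} =
      Nat.card (chordDiagrams (M - 2) ok') := by
  set c : Finset ℕ := {u, v}
  have hc : c ⊆ Icc 1 M := by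
    intro x hx
    simp only [c, mem_insert, mem_singleton] at hx
    rw [mem_Icc]
    omega
  have hD : ↑(Icc 1 M \ c) ⊆ ({u, v}ᶜ : Set ℕ) := fun x hx => by simp_all [c]
  let e := (Finpartition.eraseEquiv (insert_nonempty u {v}) hc).trans
    (Finpartition.equivOfInvOn (collapse u v) (expand u v) (mapsTo_collapse hu huv hv)
      (mapsTo_expand hu huv hv) ((invOn_expand_collapse huv).mono hD (Set.subset_univ _)))
  have key (P : {P : Finpartition (Icc 1 M) // c ∈ P.parts}) :
      P.1 ∈ chordDiagrams M ok ↔ e P ∈ chordDiagrams (M - 2) ok' := by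
    obtain ⟨P, hP⟩ := P
    have hchord {q : Finset ℕ} (hq : q ∈ P.parts.erase c) :
        IsChord ok' (q.image (collapse u v)) ↔ IsChord ok q :=
      isChord_image_collapse_iff huv hrel (subset_sdiff.2 ⟨P.le (mem_of_mem_erase hq),
        P.disjoint (mem_of_mem_erase hq) hP (ne_of_mem_erase hq)⟩)
    simp only [chordDiagrams, Set.mem_ofPred_eq, e, Equiv.trans_apply,
      Finpartition.parts_equivOfInvOn, Finpartition.parts_eraseEquiv, forall_mem_image]
    constructor
    · intro h q hq
      exact (hchord hq).2 (h q (mem_of_mem_erase hq))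
    · intro h q hq
      by_cases hqc : q = c
      · exact hqc ▸ ⟨u, v, huv, rfl, hok⟩
      · exact (hchord (mem_erase.2 ⟨hqc, hq⟩)).1 (h (mem_erase.2 ⟨hqc, hq⟩))
  exact Nat.card_congr ((Equiv.subtypeEquivRight fun _ => and_comm).trans
    ((Equiv.subtypeSubtypeEquivSubtypeInter _ _).symm.trans (e.subtypeEquiv key)))

end DeleteChord

/-- The chord `{s, e}` is long, or it is the short chord `{p, p + 1}`; as the points start at `1`,
`p = 0` allows no short chord at all. -/
def LongOrAt (p s e : ℕ) : Prop := s + 1 = e → s = p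

noncomputable def numLongOrAt (m p : ℕ) : ℕ := Nat.card (chordDiagrams (2 * m) (LongOrAt p))

theorem card_LCD_two (n : ℕ) : Nat.card (LCD n 2) = numLongOrAt n 0 := by
  rw [LCD_eq_chordDiagrams, numLongOrAt, chordDiagrams_congr]
  intro s e hs hse _
  unfold LongOrAt
  omega

theorem numLongOrAt_of_le {m p : ℕ} (h : 2 * m ≤ p) : numLongOrAt m p = numLongOrAt m 0 := by
  rw [numLongOrAt, numLongOrAt, chordDiagrams_congr]
  intro s e hs hse he
  unfold LongOrAt
  omega

theorem numLongOrAt_zero_zero : numLongOrAt 0 0 = 1 := by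
  have hparts (P : Finpartition (Icc 1 (2 * 0))) : P.parts = ∅ := P.parts_eq_empty_iff.2 (by simp)
  refine Nat.card_eq_one_iff_unique.2 ⟨⟨fun P Q => Subtype.ext (Finpartition.ext ?_)⟩, ?_⟩
  · rw [hparts, hparts]
  · exact ⟨⟨⊥, fun q hq => by simp [hparts] at hq⟩⟩

theorem numLongOrAt_succ_zero (m : ℕ) :
    numLongOrAt (m + 1) 0 = ∑ q ∈ range (2 * m), numLongOrAt m q := by
  set M := 2 * (m + 1)
  have hM : M ∈ Icc 1 M := mem_Icc.2 ⟨by omega, le_rfl⟩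
  rw [numLongOrAt, card_eq_sum_card_of_unique_index _ (range (2 * m))
    (fun q (P : Finpartition (Icc 1 M)) => ({q + 1, M} : Finset ℕ) ∈ P.parts)]
  · refine sum_congr rfl fun q hq => ?_
    rw [mem_range] at hq
    rw [card_chordDiagrams_containing (by omega) (by omega) le_rfl (by unfold LongOrAt; omega),
      show M - 2 = 2 * m by omega, numLongOrAt]
    intro s e _ _ _ _ _ _ _
    unfold LongOrAt collapse
    split_ifs <;> omega
  · intro P hP
    obtain ⟨r, hr, hMr⟩ := P.exists_mem hM
    obtain ⟨s, e, hse, rfl, hlong⟩ := hP r hr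
    have hs := mem_Icc.1 (P.le hr (mem_insert_self s {e}))
    have he := mem_Icc.1 (P.le hr (by simp : e ∈ ({s, e} : Finset ℕ)))
    have heM : e = M := by rw [mem_insert, mem_singleton] at hMr; omega
    subst heM
    unfold LongOrAt at hlong
    refine ⟨s - 1, mem_range.2 (by omega), ?_⟩
    rwa [Nat.sub_add_cancel hs.1]
  · intro P _ i hi j hj hiP hjP
    rw [mem_range] at hi hj
    have hMi : M ∈ ({i + 1, M} : Finset ℕ) := mem_insert_of_mem (mem_singleton_self M)
    have := P.eq_of_mem_parts hiP hjP hMi (by simp)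
    rw [pair_eq_pair_iff_of_lt (by omega) (by omega)] at this
    omega

theorem chordDiagrams_longOrAt_sdiff (M p : ℕ) :
    chordDiagrams M (LongOrAt (p + 1)) \ {P | {p + 1, p + 2} ∈ P.parts} =
      chordDiagrams M (LongOrAt 0) := by
  ext P
  simp only [chordDiagrams, Set.mem_sdiff, Set.mem_ofPred_eq]
  constructor
  · rintro ⟨hP, hc⟩ q hq
    obtain ⟨s, e, hse, rfl, hlong⟩ := hP q hq
    refine ⟨s, e, hse, rfl, fun hes => absurd hq ?_⟩
    have hs : s = p + 1 := hlong hes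
    subst hs hes
    exact hc
  · intro hP
    refine ⟨fun q hq => ?_, fun hc => ?_⟩
    · obtain ⟨s, e, hse, rfl, hlong⟩ := hP q hq
      have hs := mem_Icc.1 (P.le hq (mem_insert_self s {e}))
      exact ⟨s, e, hse, rfl, fun hes => by have := hlong hes; omega⟩
    · obtain ⟨s, e, hse, hcse, hlong⟩ := hP _ hc
      rw [pair_eq_pair_iff_of_lt (by omega) hse] at hcse
      unfold LongOrAt at hlong
      omega

theorem numLongOrAt_succ_succ {m p : ℕ} (hp : p ≤ 2 * m) :
    numLongOrAt (m + 1) (p + 1) = numLongOrAt (m + 1) 0 + numLongOrAt m p := by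
  set S := chordDiagrams (2 * (m + 1)) (LongOrAt (p + 1))
  have hwith : Nat.card {P ∈ S | {p + 1, p + 2} ∈ P.parts} = numLongOrAt m p := by
    rw [card_chordDiagrams_containing (by omega) (by omega) (by omega) (by unfold LongOrAt; omega),
      show 2 * (m + 1) - 2 = 2 * m by omega, numLongOrAt]
    intro s e _ _ _ _ _ _ _
    unfold LongOrAt collapse
    split_ifs <;> omega
  rw [numLongOrAt, numLongOrAt, ← chordDiagrams_longOrAt_sdiff _ p, ← hwith]
  simp only [Nat.card_coe_set_eq]
  exact (Set.ncard_inter_add_ncard_sdiff_eq_ncard S {P | {p + 1, p + 2} ∈ P.parts}).symm.trans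
    (add_comm _ _)

theorem numLongOrAt_recurrence (m : ℕ) :
    numLongOrAt (m + 2) 0 = (2 * m + 3) * numLongOrAt (m + 1) 0 + numLongOrAt m 0 := by
  calc numLongOrAt (m + 2) 0
      = numLongOrAt (m + 1) 0 + ∑ q ∈ range (2 * m + 1), numLongOrAt (m + 1) (q + 1) := by
        rw [numLongOrAt_succ_zero, show 2 * (m + 1) = 2 * m + 1 + 1 by ring, sum_range_succ',
          add_comm]
    _ = numLongOrAt (m + 1) 0 +
          ∑ q ∈ range (2 * m + 1), (numLongOrAt (m + 1) 0 + numLongOrAt m q) := by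
        refine congrArg _ (sum_congr rfl fun q hq => numLongOrAt_succ_succ ?_)
        rw [mem_range] at hq
        omega
    _ = (2 * m + 2) * numLongOrAt (m + 1) 0 + ∑ q ∈ range (2 * m), numLongOrAt m q +
          numLongOrAt m (2 * m) := by
        rw [sum_add_distrib, sum_const, card_range, sum_range_succ, smul_eq_mul]
        ring
    _ = (2 * m + 3) * numLongOrAt (m + 1) 0 + numLongOrAt m 0 := by
        rw [← numLongOrAt_succ_zero, numLongOrAt_of_le le_rfl]
        ring

theorem stmt_12 (a : ℕ → ℕ) (h1 : a 1 = 0) (h2 : a 2 = 1)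
    (hrec : ∀ n : ℕ, 3 ≤ n → a n = (2 * n - 1) * a (n - 1) + a (n - 2)) :
    ∀ n : ℕ, 1 ≤ n → a n = Nat.card (LCD n 2) := by
  have hone : numLongOrAt 1 0 = 0 := numLongOrAt_succ_zero 0
  have htwo : numLongOrAt 2 0 = 1 := by
    rw [numLongOrAt_recurrence, hone, numLongOrAt_zero_zero]
  have key (m : ℕ) : a (m + 1) = numLongOrAt (m + 1) 0 ∧ a (m + 2) = numLongOrAt (m + 2) 0 := by
    induction m with
    | zero => exact ⟨h1.trans hone.symm, h2.trans htwo.symm⟩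
    | succ m ih =>
      have hrec' : a (m + 3) = (2 * (m + 1) + 3) * a (m + 2) + a (m + 1) := by
        rw [hrec (m + 3) (by omega), show 2 * (m + 3) - 1 = 2 * (m + 1) + 3 by omega]
        rfl
      exact ⟨ih.2, hrec'.trans (by rw [ih.1, ih.2, numLongOrAt_recurrence (m + 1)])⟩
  intro n hn
  obtain ⟨m, rfl⟩ := Nat.exists_eq_add_of_le' hn
  rw [card_LCD_two, (key m).1]
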